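/- arXiv:2002.03687 — 5 statements merged into one kernel-verified Lean document; each statement's English description precedes it below -/
import Mathlib

section
/- Let P be an orthogonal projector (a real symmetric matrix with P² = P) and M a real square matrix. For each positive integer q, the spectral norm satisfies ‖PM‖ ≤ ‖P(MMᵀ)^q M‖^{1/(2q+1)}. -/
/-! With `B = M M*`, the sequence `g k = ‖P B^k P‖` is log-convex: `P B^(k+1) P` factors
as `X* Y` with `X* X = P B^k P` and `Y* Y = P B^(k+2) P`, so the C*-identity `‖X* X‖ = ‖X‖²`
bounds it by `√(g k * g (k+2))`. Together with `g 0 = ‖P‖ ≤ 1` this gives `g 1 ^ n ≤ g n`,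
and `g 1 = ‖P M‖²`, `g (2q+1) = ‖P B^q M‖²`. Nothing beyond the C*-identity is used, so the
argument runs in any C*-ring. -/

open Matrix
open scoped Matrix.Norms.L2Operator

theorem pow_le_of_sq_le_mul {K : Type*} [Field K] [LinearOrder K] [IsStrictOrderedRing K]
    {g : ℕ → K} (hg : ∀ k, 0 ≤ g k) (h0 : g 0 ≤ 1)
    (hc : ∀ k, g (k + 1) ^ 2 ≤ g k * g (k + 2)) (n : ℕ) :
    g 1 ^ (n + 1) ≤ g (n + 1) := by
  have step : ∀ k, g 1 * g k ≤ g (k + 1) := by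
    intro k
    induction k with
    | zero => simpa using mul_le_of_le_one_right (hg 1) h0
    | succ k ih =>
      -- cancel `g k` in `g 1 * g k * g (k + 1) ≤ g (k + 1) ^ 2 ≤ g k * g (k + 2)`
      rcases (hg k).eq_or_lt with hk | hk
      · have : g (k + 1) = 0 := pow_eq_zero_iff two_ne_zero |>.mp
          (le_antisymm (by simpa [← hk] using hc k) (sq_nonneg _))
        simpa [this] using hg (k + 2)
      · exact le_of_mul_le_mul_left
          (by nlinarith [hc k, mul_le_mul_of_nonneg_right ih (hg (k + 1))]) hk
  induction n with
  | zero => simp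
  | succ n ih =>
    calc g 1 ^ (n + 2) = g 1 * g 1 ^ (n + 1) := by ring
      _ ≤ g 1 * g (n + 1) := mul_le_mul_of_nonneg_left ih (hg 1)
      _ ≤ g (n + 2) := step (n + 1)

theorem norm_star_mul_sq_le_mul {A : Type*} [NonUnitalNormedRing A] [StarRing A] [CStarRing A]
    (x y : A) :
    ‖star x * y‖ ^ 2 ≤ ‖star x * x‖ * ‖star y * y‖ := by
  rw [CStarRing.norm_star_mul_self, CStarRing.norm_star_mul_self, ← mul_mul_mul_comm, ← sq]
  gcongr
  simpa [norm_star] using norm_mul_le (star x) y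

namespace IsSelfAdjoint

section Ring

variable {R : Type*} [Ring R] [StarRing R] {P : R}

theorem conj_pow_add_eq_star_mul (hP : IsSelfAdjoint P) (M : R) (i j : ℕ) :
    P * (M * star M) ^ (i + j) * P
      = star ((M * star M) ^ i * P) * ((M * star M) ^ j * P) := by
  rw [star_mul, hP.star_eq, ((mul_star_self M).pow i).star_eq, pow_add]
  noncomm_ring

theorem conj_pow_add_add_one_eq_star_mul (hP : IsSelfAdjoint P) (M : R) (i j : ℕ) :
    P * (M * star M) ^ (i + j + 1) * P
      = star (star M * (M * star M) ^ i * P) * (star M * (M * star M) ^ j * P) := by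
  rw [star_mul, star_mul, hP.star_eq, ((mul_star_self M).pow i).star_eq, star_star,
    add_right_comm, pow_add, pow_succ]
  noncomm_ring

theorem conj_pow_two_mul_add_one_eq_mul_star (hP : IsSelfAdjoint P) (M : R) (n : ℕ) :
    P * (M * star M) ^ (2 * n + 1) * P
      = P * (M * star M) ^ n * M * star (P * (M * star M) ^ n * M) := by
  rw [star_mul, star_mul, hP.star_eq, ((mul_star_self M).pow n).star_eq,
    two_mul, add_right_comm, pow_add, pow_succ]
  noncomm_ring

end Ring

section CStarRing

variable {A : Type*} [NormedRing A] [StarRing A] [CStarRing A] {P : A}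

theorem norm_conj_pow_succ_sq_le (hP : IsSelfAdjoint P) (M : A) (k : ℕ) :
    ‖P * (M * star M) ^ (k + 1) * P‖ ^ 2
      ≤ ‖P * (M * star M) ^ k * P‖ * ‖P * (M * star M) ^ (k + 2) * P‖ := by
  obtain ⟨i, rfl | rfl⟩ := Nat.even_or_odd' k
  · rw [show 2 * i + 1 = i + (i + 1) by ring, show 2 * i + 2 = (i + 1) + (i + 1) by ring,
      two_mul, hP.conj_pow_add_eq_star_mul, hP.conj_pow_add_eq_star_mul,
      hP.conj_pow_add_eq_star_mul]
    exact norm_star_mul_sq_le_mul _ _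
  · rw [show 2 * i + 1 + 1 = i + (i + 1) + 1 by ring,
      show 2 * i + 1 + 2 = (i + 1) + (i + 1) + 1 by ring, two_mul,
      hP.conj_pow_add_add_one_eq_star_mul, hP.conj_pow_add_add_one_eq_star_mul,
      hP.conj_pow_add_add_one_eq_star_mul]
    exact norm_star_mul_sq_le_mul _ _

theorem norm_conj_pow_two_mul_add_one (hP : IsSelfAdjoint P) (M : A) (n : ℕ) :
    ‖P * (M * star M) ^ (2 * n + 1) * P‖ = ‖P * (M * star M) ^ n * M‖ ^ 2 := by
  rw [hP.conj_pow_two_mul_add_one_eq_mul_star, CStarRing.norm_self_mul_star, sq]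

end CStarRing

end IsSelfAdjoint

theorem IsStarProjection.norm_mul_pow_two_mul_add_one_le {A : Type*} [NormedRing A] [StarRing A]
    [CStarRing A] {P : A} (hP : IsStarProjection P) (M : A) (n : ℕ) :
    ‖P * M‖ ^ (2 * n + 1) ≤ ‖P * (M * star M) ^ n * M‖ := by
  have hg0 : ‖P * (M * star M) ^ 0 * P‖ ≤ 1 := by
    simpa [hP.isIdempotentElem.eq] using IsStarProjection.norm_le P hP
  have hg := pow_le_of_sq_le_mul (g := fun k => ‖P * (M * star M) ^ k * P‖)
    (fun _ => norm_nonneg _) hg0 (hP.isSelfAdjoint.norm_conj_pow_succ_sq_le M) (2 * n)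
  have hg1 := hP.isSelfAdjoint.norm_conj_pow_two_mul_add_one M 0
  rw [hP.isSelfAdjoint.norm_conj_pow_two_mul_add_one, hg1, pow_zero, mul_one, ← pow_mul,
    mul_comm, pow_mul] at hg
  exact (pow_le_pow_iff_left₀ (by positivity) (norm_nonneg _) two_ne_zero).mp hg

theorem power_iteration_norm_bound_general {d : ℕ} (P M : Matrix (Fin d) (Fin d) ℝ)
    (hsymm : P.IsSymm) (hidem : P * P = P) (q : ℕ) :
    ‖P * M‖ ≤ ‖P * (M * Mᵀ) ^ q * M‖ ^ ((1 : ℝ) / (2 * q + 1)) := by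
  have hstar (X : Matrix (Fin d) (Fin d) ℝ) : star X = Xᵀ := by
    rw [star_eq_conjTranspose, conjTranspose_eq_transpose_of_trivial]
  have hP : IsStarProjection P := ⟨hidem, (hstar P).trans hsymm⟩
  have key := hP.norm_mul_pow_two_mul_add_one_le M q
  rw [hstar, ← Real.rpow_natCast] at key
  rw [one_div, Real.le_rpow_inv_iff_of_pos (norm_nonneg _) (norm_nonneg _) (by positivity)]
  exact_mod_cast key

/-- For an orthogonal projector `P`, a real square matrix `M`, and a positive integer `q`,
the spectral norm satisfies `‖PM‖ ≤ ‖P(MMᵀ)^q M‖^(1/(2q+1))`. -/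
theorem power_iteration_norm_bound {d : ℕ} (P M : Matrix (Fin d) (Fin d) ℝ)
    (hsymm : P.IsSymm) (hidem : P * P = P) (q : ℕ) (hq : 0 < q) :
    ‖P * M‖ ≤ ‖P * (M * Mᵀ) ^ q * M‖ ^ ((1 : ℝ) / (2 * q + 1)) :=
  power_iteration_norm_bound_general P M hsymm hidem q
end

section
/- Let M be a partitioned real positive semidefinite matrix M = [[A, B], [Bᵀ, C]] with square diagonal blocks A and C. Then the spectral norm satisfies ‖M‖ ≤ ‖A‖ + ‖C‖. -/
open Matrix
open scoped Matrix.Norms.L2Operator MatrixOrder ComplexOrder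

/-!
Write `M = Lᴴ L` and split `L = [L₁ L₂]` into column blocks, so that `A = L₁ᴴ L₁` and
`C = L₂ᴴ L₂`. The C⋆-identity `‖Lᴴ L‖ = ‖L‖² = ‖L Lᴴ‖` turns the Gram matrix into the sum
`L Lᴴ = L₁ L₁ᴴ + L₂ L₂ᴴ`, and the triangle inequality bounds its norm by
`‖L₁ L₁ᴴ‖ + ‖L₂ L₂ᴴ‖ = ‖A‖ + ‖C‖`.
-/

namespace Matrix

lemma conjTranspose_fromCols_mul_fromCols {R m n₁ n₂ : Type*} [Semiring R] [Star R] [Fintype m]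
    (L₁ : Matrix m n₁ R) (L₂ : Matrix m n₂ R) :
    (fromCols L₁ L₂)ᴴ * fromCols L₁ L₂ =
      fromBlocks (L₁ᴴ * L₁) (L₁ᴴ * L₂) (L₂ᴴ * L₁) (L₂ᴴ * L₂) := by
  rw [conjTranspose_fromCols_eq_fromRows_conjTranspose, fromRows_mul_fromCols]

variable {𝕜 : Type*} [RCLike 𝕜] {m n n₁ n₂ : Type*} [Fintype m] [DecidableEq m] [Fintype n]
  [DecidableEq n] [Fintype n₁] [DecidableEq n₁] [Fintype n₂] [DecidableEq n₂]

lemma l2_opNorm_mul_conjTranspose_self (A : Matrix m n 𝕜) : ‖A * Aᴴ‖ = ‖A‖ * ‖A‖ := by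
  simpa only [conjTranspose_conjTranspose, l2_opNorm_conjTranspose] using
    l2_opNorm_conjTranspose_mul_self Aᴴ

lemma l2_opNorm_conjTranspose_mul_self_comm (A : Matrix m n 𝕜) : ‖Aᴴ * A‖ = ‖A * Aᴴ‖ := by
  rw [l2_opNorm_conjTranspose_mul_self, l2_opNorm_mul_conjTranspose_self]

lemma l2_opNorm_conjTranspose_fromCols_mul_fromCols_le (L₁ : Matrix m n₁ 𝕜)
    (L₂ : Matrix m n₂ 𝕜) :
    ‖(fromCols L₁ L₂)ᴴ * fromCols L₁ L₂‖ ≤ ‖L₁ᴴ * L₁‖ + ‖L₂ᴴ * L₂‖ :=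
  calc ‖(fromCols L₁ L₂)ᴴ * fromCols L₁ L₂‖ = ‖fromCols L₁ L₂ * (fromCols L₁ L₂)ᴴ‖ :=
        l2_opNorm_conjTranspose_mul_self_comm _
    _ = ‖L₁ * L₁ᴴ + L₂ * L₂ᴴ‖ := by
        rw [conjTranspose_fromCols_eq_fromRows_conjTranspose, fromCols_mul_fromRows]
    _ ≤ ‖L₁ * L₁ᴴ‖ + ‖L₂ * L₂ᴴ‖ := norm_add_le _ _
    _ = ‖L₁ᴴ * L₁‖ + ‖L₂ᴴ * L₂‖ := by
        rw [l2_opNorm_conjTranspose_mul_self_comm L₁, l2_opNorm_conjTranspose_mul_self_comm L₂]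

lemma PosSemidef.l2_opNorm_fromBlocks_le
    {A : Matrix n₁ n₁ 𝕜} {B : Matrix n₁ n₂ 𝕜} {D : Matrix n₂ n₁ 𝕜} {C : Matrix n₂ n₂ 𝕜}
    (hM : (fromBlocks A B D C).PosSemidef) : ‖fromBlocks A B D C‖ ≤ ‖A‖ + ‖C‖ := by
  obtain ⟨L, hL⟩ := CStarAlgebra.nonneg_iff_eq_star_mul_self.mp hM.nonneg
  rw [star_eq_conjTranspose, ← fromCols_toCols L, conjTranspose_fromCols_mul_fromCols] at hL
  obtain ⟨rfl, -, -, rfl⟩ := fromBlocks_inj.mp hL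
  rw [hL, ← conjTranspose_fromCols_mul_fromCols]
  exact l2_opNorm_conjTranspose_fromCols_mul_fromCols_le _ _

end Matrix

/-- For a partitioned positive semidefinite matrix `M = [[A, B], [Bᵀ, C]]`,
the spectral norm satisfies `‖M‖ ≤ ‖A‖ + ‖C‖`. -/
theorem norm_fromBlocks_le {p q : ℕ}
    (A : Matrix (Fin p) (Fin p) ℝ) (B : Matrix (Fin p) (Fin q) ℝ)
    (C : Matrix (Fin q) (Fin q) ℝ)
    (hM : (Matrix.fromBlocks A B Bᵀ C).PosSemidef) :
    ‖Matrix.fromBlocks A B Bᵀ C‖ ≤ ‖A‖ + ‖C‖ :=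
  hM.l2_opNorm_fromBlocks_le
end

section
/- Let P̂ be an orthogonal projector, X a nonnegative diagonal matrix, and t ≥ 1 a real number. Then ‖P̂XP̂‖^t ≤ ‖P̂X^tP̂‖ in spectral norm. -/
/-! For `x` with `y = P̂x`, the quadratic form `⟪x, P̂XP̂x⟫ = ∑ vᵢ yᵢ²` is a weighted sum whose
weights satisfy `∑ yᵢ² = ‖y‖² ≤ ‖x‖²`. Weighted Hölder (Jensen for `s ↦ sᵗ`) bounds it by
`‖x‖^(2 - 2/t) ⟪x, P̂XᵗP̂x⟫^(1/t) ≤ ‖P̂XᵗP̂‖^(1/t) ‖x‖²`, and the norm of the symmetric matrix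
`P̂XP̂` is the supremum of its Rayleigh quotient. -/

open Matrix
open scoped Matrix.Norms.L2Operator RealInnerProductSpace

theorem EuclideanSpace.real_norm_sq_eq_dotProduct {n : Type*} [Fintype n]
    (x : EuclideanSpace ℝ n) : ‖x‖ ^ 2 = x.ofLp ⬝ᵥ x.ofLp := by
  rw [← real_inner_self_eq_norm_sq, EuclideanSpace.inner_eq_star_dotProduct, star_trivial]

theorem Real.sum_mul_le_rpow_inv_mul_of_sum_le {ι : Type*} (s : Finset ι) {w f : ι → ℝ}
    (hw : ∀ i, 0 ≤ w i) (hf : ∀ i, 0 ≤ f i) {p a b : ℝ} (hp : 1 ≤ p) (hb : 0 ≤ b)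
    (hwa : ∑ i ∈ s, w i ≤ a) (hwf : ∑ i ∈ s, w i * f i ^ p ≤ b * a) :
    ∑ i ∈ s, w i * f i ≤ b ^ p⁻¹ * a := by
  have hW : 0 ≤ ∑ i ∈ s, w i := Finset.sum_nonneg fun i _ => hw i
  have hWF : 0 ≤ ∑ i ∈ s, w i * f i ^ p :=
    Finset.sum_nonneg fun i _ => mul_nonneg (hw i) (Real.rpow_nonneg (hf i) p)
  have ha : 0 ≤ a := hW.trans hwa
  calc ∑ i ∈ s, w i * f i
      ≤ (∑ i ∈ s, w i) ^ (1 - p⁻¹) * (∑ i ∈ s, w i * f i ^ p) ^ p⁻¹ :=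
        inner_le_weight_mul_Lp_of_nonneg s hp w f hw hf
    _ ≤ a ^ (1 - p⁻¹) * (b * a) ^ p⁻¹ :=
        mul_le_mul (Real.rpow_le_rpow hW hwa (sub_nonneg.2 (inv_le_one_of_one_le₀ hp)))
          (Real.rpow_le_rpow hWF hwf (inv_nonneg.2 (zero_le_one.trans hp)))
          (Real.rpow_nonneg hWF _) (Real.rpow_nonneg ha _)
    _ = b ^ p⁻¹ * a := by
        rw [Real.mul_rpow hb ha, mul_left_comm, ← Real.rpow_add' ha (by norm_num), sub_add_cancel,
          Real.rpow_one, mul_comm]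

namespace Matrix

variable {n : Type*} [Fintype n]

theorem IsSymm.mulVec_dotProduct_mulVec_le_of_isIdempotentElem {P : Matrix n n ℝ}
    (hP : P.IsSymm) (hPP : IsIdempotentElem P) (x : n → ℝ) : P *ᵥ x ⬝ᵥ P *ᵥ x ≤ x ⬝ᵥ x := by
  have hPx : P *ᵥ x ⬝ᵥ P *ᵥ x = x ⬝ᵥ P *ᵥ x := by
    rw [dotProduct_mulVec, ← mulVec_transpose, hP.eq, mulVec_mulVec, hPP.eq, dotProduct_comm]
  have := dotProduct_self_star_nonneg (x - P *ᵥ x)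
  simp only [star_trivial, sub_dotProduct, dotProduct_sub] at this
  linarith [dotProduct_comm x (P *ᵥ x)]

variable [DecidableEq n]

theorem IsSymm.mul_diagonal_mul {R : Type*} [CommSemiring R] {P : Matrix n n R} (hP : P.IsSymm)
    (w : n → R) : (P * diagonal w * P).IsSymm := by
  rw [IsSymm, transpose_mul, transpose_mul, hP.eq, diagonal_transpose, mul_assoc]

theorem IsSymm.dotProduct_mulVec_mul_diagonal_mul {R : Type*} [CommSemiring R] {P : Matrix n n R}
    (hP : P.IsSymm) (w x : n → R) :
    x ⬝ᵥ (P * diagonal w * P) *ᵥ x = ∑ i, (P *ᵥ x) i ^ 2 * w i := by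
  rw [← mulVec_mulVec, ← mulVec_mulVec, dotProduct_mulVec, ← mulVec_transpose, hP.eq]
  simp only [dotProduct, mulVec_diagonal]
  exact Finset.sum_congr rfl fun i _ => by ring

theorem dotProduct_mulVec_le_l2_opNorm_mul (M : Matrix n n ℝ) (x : n → ℝ) :
    x ⬝ᵥ M *ᵥ x ≤ ‖M‖ * (x ⬝ᵥ x) := by
  let x' := WithLp.toLp 2 x
  calc x ⬝ᵥ M *ᵥ x = ⟪x', toEuclideanCLM (𝕜 := ℝ) M x'⟫ := (inner_toEuclideanCLM M x' x').symm
    _ ≤ ‖x'‖ * (‖M‖ * ‖x'‖) :=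
      (real_inner_le_norm _ _).trans (by gcongr; exact (toEuclideanCLM (𝕜 := ℝ) M).le_opNorm x')
    _ = ‖M‖ * (x ⬝ᵥ x) := by rw [← EuclideanSpace.real_norm_sq_eq_dotProduct x']; ring

theorem l2_opNorm_le_of_abs_dotProduct_mulVec_le {M : Matrix n n ℝ} (hM : M.IsSymm) {C : ℝ}
    (hC : 0 ≤ C) (h : ∀ x, |x ⬝ᵥ M *ᵥ x| ≤ C * (x ⬝ᵥ x)) : ‖M‖ ≤ C := by
  have hT : (toEuclideanCLM (𝕜 := ℝ) M : EuclideanSpace ℝ n →ₗ[ℝ] _).IsSymmetric := by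
    rw [coe_toEuclideanCLM_eq_toEuclideanLin, isSymmetric_toEuclideanLin_iff]
    exact hM
  rw [← l2_opNorm_toEuclideanCLM, ContinuousLinearMap.norm_eq_iSup_rayleighQuotient _ hT]
  refine ciSup_le fun x => ?_
  rw [ContinuousLinearMap.rayleighQuotient, ContinuousLinearMap.reApplyInnerSelf_apply,
    RCLike.re_to_real, real_inner_comm, inner_toEuclideanCLM, abs_div, abs_sq,
    EuclideanSpace.real_norm_sq_eq_dotProduct]
  exact div_le_of_le_mul₀ (dotProduct_self_star_nonneg _) hC (h _)

end Matrix

/-- For an orthogonal projector `P̂`, a nonnegative diagonal matrix `X = diag v`, and a real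
number `t ≥ 1`, the spectral norm satisfies `‖P̂XP̂‖^t ≤ ‖P̂X^tP̂‖`, where `X^t` is taken
entrywise on the diagonal. -/
theorem proj_diag_proj_rpow_le {d : ℕ} (P : Matrix (Fin d) (Fin d) ℝ)
    (hsymm : P.IsSymm) (hidem : P * P = P)
    (v : Fin d → ℝ) (hv : ∀ i, 0 ≤ v i) (t : ℝ) (ht : 1 ≤ t) :
    ‖P * Matrix.diagonal v * P‖ ^ t ≤ ‖P * Matrix.diagonal (fun i => v i ^ t) * P‖ := by
  set B := P * diagonal (fun i => v i ^ t) * P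
  suffices hA : ‖P * diagonal v * P‖ ≤ ‖B‖ ^ t⁻¹ from
    (Real.le_rpow_inv_iff_of_pos (norm_nonneg _) (norm_nonneg B) (zero_lt_one.trans_le ht)).1 hA
  refine l2_opNorm_le_of_abs_dotProduct_mulVec_le (hsymm.mul_diagonal_mul v) (by positivity)
    fun x => ?_
  have hPx : ∑ i, (P *ᵥ x) i ^ 2 ≤ x ⬝ᵥ x := by
    simpa only [dotProduct, sq] using hsymm.mulVec_dotProduct_mulVec_le_of_isIdempotentElem hidem x
  have hBx : ∑ i, (P *ᵥ x) i ^ 2 * v i ^ t ≤ ‖B‖ * (x ⬝ᵥ x) := by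
    rw [← hsymm.dotProduct_mulVec_mul_diagonal_mul]
    exact dotProduct_mulVec_le_l2_opNorm_mul B x
  rw [hsymm.dotProduct_mulVec_mul_diagonal_mul,
    abs_of_nonneg (Finset.sum_nonneg fun i _ => mul_nonneg (sq_nonneg _) (hv i))]
  exact Real.sum_mul_le_rpow_inv_mul_of_sum_le _ (fun i => sq_nonneg _) hv ht (norm_nonneg B)
    hPx hBx
end

section
/- Let A ∈ ℝ^{d×d} be symmetric positive definite with eigendecomposition A = QΣQᵀ, Σ = diag(σ₁ ≥ … ≥ σ_d > 0), partitioned as Q = [Q_∥, Q_⊥] with Q_∥ ∈ ℝ^{d×m}, Σ₁ = diag(σ₁,…,σ_m), Σ₂ = diag(σ_{m+1},…,σ_d). Let Ã = Q Σ̃ Qᵀ share the same eigenvectors with diagonal Σ̃ partitioned into Σ̃₁ (invertible) and Σ̃₂. Let Ω ∈ ℝ^{d×l} (m ≤ l) be such that Ω₁ := Q_∥ᵀΩ has full row rank, and set Y = AΩ. Then ‖(I − P_Y)Ã‖² ≤ ‖Σ₂ Q_⊥ᵀΩ (Q_∥ᵀΩ)†‖² · ‖Σ₁⁻¹Σ̃₁‖²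 + ‖Σ̃₂‖². -/
/-!
Since `P_Y` is the orthogonal projector onto `range(AΩ)`, `‖(I - P_Y)Ã‖ ≤ ‖Ã - AΩF‖` for every
`F`. Full row rank turns the generalized inverse into a right inverse, `Q_∥ᵀΩG = I`, so the choice
`F = G Σ₁⁻¹Σ̃₁ Q_∥ᵀ` reproduces the block `Q_∥Σ̃₁Q_∥ᵀ` of `Ã` exactly. What is left is
`Q_⊥ [-Σ₂Q_⊥ᵀΩGΣ₁⁻¹Σ̃₁, Σ̃₂] Qᵀ`; the orthogonal factors do not change the norm, and the squared
norm of a row of two blocks is at most the sum of their squared norms.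
-/

open Matrix
open scoped Matrix.Norms.L2Operator

namespace Matrix

section Algebra

variable {n m k l p : Type*} [Fintype m] [Fintype k]

theorem mul_eq_one_of_mul_mul_eq_self_of_rank_eq_card {K : Type*} [Field K] [Fintype n]
    [DecidableEq m] {A : Matrix m n K} {G : Matrix n m K} (hA : A.rank = Fintype.card m)
    (hAGA : A * G * A = A) : A * G = 1 := by
  have hker : (A * G - 1) * A = 0 := by rw [Matrix.sub_mul, hAGA, Matrix.one_mul, sub_self]
  have hrank : (A * G - 1).rank = 0 := by
    have := rank_add_rank_le_card_of_mul_eq_zero hker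
    omega
  rw [rank, Submodule.finrank_eq_zero, LinearMap.range_eq_bot] at hrank
  rw [← sub_eq_zero]
  exact toLin'.injective (by rw [map_zero, toLin'_apply']; exact hrank)

theorem mul_eq_self_of_range_mulVecLin_le {R : Type*} [CommSemiring R] [Fintype p]
    [DecidableEq p] {P : Matrix m m R} {W : Matrix m p R} (hP : P * P = P)
    (hW : LinearMap.range W.mulVecLin ≤ LinearMap.range P.mulVecLin) : P * W = W := by
  refine toLin'.injective (LinearMap.ext fun v => ?_)
  obtain ⟨u, hu⟩ := hW ⟨v, rfl⟩
  rw [mulVecLin_apply, mulVecLin_apply] at hu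
  rw [toLin'_apply, toLin'_apply, ← mulVec_mulVec, ← hu, mulVec_mulVec, hP]

theorem mul_diagonal_mul_transpose_eq_add {R : Type*} [Semiring R] [DecidableEq m]
    [DecidableEq k] (Q : Matrix n (m ⊕ k) R) (d : m ⊕ k → R) :
    Q * diagonal d * Qᵀ
      = Q.submatrix id Sum.inl * diagonal (fun i => d (Sum.inl i)) * (Q.submatrix id Sum.inl)ᵀ
        + Q.submatrix id Sum.inr * diagonal (fun i => d (Sum.inr i))
          * (Q.submatrix id Sum.inr)ᵀ := by
  ext i j
  simp [mul_apply, Fintype.sum_sum_type, diagonal_apply]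

variable {R : Type*} [Ring R] [Fintype n] [Fintype l] [DecidableEq m]

theorem add_sub_mul_mul_eq_mul_sub (Q₁ : Matrix n m R) (Q₂ : Matrix n k R)
    {S₁ T St₁ : Matrix m m R} (S₂ St₂ : Matrix k k R) (Ω : Matrix n l R) {G : Matrix l m R}
    (hG : Q₁ᵀ * Ω * G = 1) (hT : S₁ * T = St₁) :
    (Q₁ * St₁ * Q₁ᵀ + Q₂ * St₂ * Q₂ᵀ) - (Q₁ * S₁ * Q₁ᵀ + Q₂ * S₂ * Q₂ᵀ) * Ω * (G * T * Q₁ᵀ)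
      = Q₂ * (St₂ * Q₂ᵀ - S₂ * Q₂ᵀ * Ω * G * T * Q₁ᵀ) := by
  have h : Q₁ * S₁ * Q₁ᵀ * Ω * (G * T * Q₁ᵀ) = Q₁ * St₁ * Q₁ᵀ := by
    calc Q₁ * S₁ * Q₁ᵀ * Ω * (G * T * Q₁ᵀ) = Q₁ * S₁ * (Q₁ᵀ * Ω * G) * T * Q₁ᵀ := by
          simp only [Matrix.mul_assoc]
      _ = Q₁ * St₁ * Q₁ᵀ := by rw [hG, Matrix.mul_one, Matrix.mul_assoc Q₁, hT]
  rw [Matrix.add_mul, Matrix.add_mul, h, add_sub_add_left_eq_sub, Matrix.mul_sub]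
  simp only [Matrix.mul_assoc]

theorem mul_diagonal_mul_transpose_sub_eq [DecidableEq k] (Q : Matrix n (m ⊕ k) R)
    (d e : m ⊕ k → R) (Ω : Matrix n l R) {G : Matrix l m R} {T : Matrix m m R}
    (hG : (Q.submatrix id Sum.inl)ᵀ * Ω * G = 1)
    (hT : diagonal (fun i => d (Sum.inl i)) * T = diagonal fun i => e (Sum.inl i)) :
    Q * diagonal e * Qᵀ - Q * diagonal d * Qᵀ * Ω * (G * T * (Q.submatrix id Sum.inl)ᵀ)
      = Q.submatrix id Sum.inr
        * (fromCols (-(diagonal (fun i => d (Sum.inr i)) * (Q.submatrix id Sum.inr)ᵀ * Ω * G * T))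
            (diagonal fun i => e (Sum.inr i)) * Qᵀ) := by
  rw [mul_diagonal_mul_transpose_eq_add, mul_diagonal_mul_transpose_eq_add,
    add_sub_mul_mul_eq_mul_sub _ _ _ _ _ hG hT]
  conv_rhs => rw [← fromCols_toCols Q, transpose_fromCols, fromCols_mul_fromRows, Matrix.neg_mul,
    ← sub_eq_neg_add]
  rfl

end Algebra

theorem conjTranspose_submatrix_mul_self_eq_one {R n m p : Type*} [Semiring R] [StarRing R]
    [Fintype n] [DecidableEq m] [DecidableEq p] {U : Matrix n m R} (hU : Uᴴ * U = 1)
    {e : p → m} (he : Function.Injective e) : (U.submatrix id e)ᴴ * U.submatrix id e = 1 := by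
  rw [conjTranspose_submatrix, ← submatrix_mul _ _ _ _ _ Function.bijective_id, hU,
    submatrix_one _ he]

section L2OpNorm

variable {𝕜 n m k p : Type*} [RCLike 𝕜] [Fintype n] [Fintype m] [Fintype k] [Fintype p]
  [DecidableEq m] [DecidableEq k] [DecidableEq p]

theorem l2_opNorm_mul_of_conjTranspose_mul_self_eq_one {U : Matrix n m 𝕜} (hU : Uᴴ * U = 1)
    (M : Matrix m p 𝕜) : ‖U * M‖ = ‖M‖ := by
  have h : ‖U * M‖ * ‖U * M‖ = ‖M‖ * ‖M‖ := by
    rw [← l2_opNorm_conjTranspose_mul_self, ← l2_opNorm_conjTranspose_mul_self,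
      conjTranspose_mul, Matrix.mul_assoc, ← Matrix.mul_assoc Uᴴ, hU, Matrix.one_mul]
  exact (mul_self_inj (norm_nonneg _) (norm_nonneg _)).mp h

theorem l2_opNorm_mul_conjTranspose_of_conjTranspose_mul_self_eq_one [DecidableEq n]
    {U : Matrix n m 𝕜} (hU : Uᴴ * U = 1) (M : Matrix p m 𝕜) : ‖M * Uᴴ‖ = ‖M‖ := by
  rw [← l2_opNorm_conjTranspose, conjTranspose_mul, conjTranspose_conjTranspose,
    l2_opNorm_mul_of_conjTranspose_mul_self_eq_one hU, l2_opNorm_conjTranspose]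

theorem l2_opNorm_self_mul_conjTranspose (A : Matrix p m 𝕜) : ‖A * Aᴴ‖ = ‖A‖ * ‖A‖ := by
  rw [← l2_opNorm_conjTranspose A, ← l2_opNorm_conjTranspose_mul_self,
    conjTranspose_conjTranspose]

theorem l2_opNorm_fromCols_sq_le (C : Matrix p m 𝕜) (D : Matrix p k 𝕜) :
    ‖fromCols C D‖ ^ 2 ≤ ‖C‖ ^ 2 + ‖D‖ ^ 2 := by
  calc ‖fromCols C D‖ ^ 2 = ‖C * Cᴴ + D * Dᴴ‖ := by
        rw [sq, ← l2_opNorm_self_mul_conjTranspose,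
          conjTranspose_fromCols_eq_fromRows_conjTranspose, fromCols_mul_fromRows]
    _ ≤ ‖C‖ ^ 2 + ‖D‖ ^ 2 := by
        rw [sq, sq, ← l2_opNorm_self_mul_conjTranspose, ← l2_opNorm_self_mul_conjTranspose]
        exact norm_add_le _ _

theorem l2_opNorm_one_sub_mul_le_of_mul_eq_self {P : Matrix m m 𝕜} (hP : IsStarProjection P)
    {W : Matrix m n 𝕜} (hPW : P * W = W) (M : Matrix m p 𝕜) (N : Matrix n p 𝕜) :
    ‖(1 - P) * M‖ ≤ ‖M - W * N‖ := by
  have hW : (1 - P) * W = 0 := by rw [Matrix.sub_mul, Matrix.one_mul, hPW, sub_self]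
  rw [← sub_zero ((1 - P) * M), ← Matrix.zero_mul N, ← hW, Matrix.mul_assoc, ← Matrix.mul_sub]
  exact (l2_opNorm_mul _ _).trans (mul_le_of_le_one_left (norm_nonneg _) hP.one_sub.norm_le)

end L2OpNorm

end Matrix

theorem randomized_rangefinder_error_bound_general {m k l : ℕ}
    (Q : Matrix (Fin m ⊕ Fin k) (Fin m ⊕ Fin k) ℝ)
    (hQ₁ : Qᵀ * Q = 1)
    (σ σt : Fin m ⊕ Fin k → ℝ)
    (hσpos : ∀ i, 0 < σ i)
    (Ω : Matrix (Fin m ⊕ Fin k) (Fin l) ℝ)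
    (hfullrank : ((Q.submatrix id Sum.inl)ᵀ * Ω).rank = m)
    (G : Matrix (Fin l) (Fin m) ℝ)
    (hG₁ : ((Q.submatrix id Sum.inl)ᵀ * Ω) * G * ((Q.submatrix id Sum.inl)ᵀ * Ω)
        = (Q.submatrix id Sum.inl)ᵀ * Ω)
    (PY : Matrix (Fin m ⊕ Fin k) (Fin m ⊕ Fin k) ℝ)
    (hPYsymm : PY.IsSymm) (hPYidem : PY * PY = PY)
    (hPYrange : LinearMap.range PY.mulVecLin
        = LinearMap.range ((Q * Matrix.diagonal σ * Qᵀ) * Ω).mulVecLin) :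
    ‖(1 - PY) * (Q * Matrix.diagonal σt * Qᵀ)‖ ^ 2
      ≤ ‖Matrix.diagonal (fun i => σ (Sum.inr i)) * (Q.submatrix id Sum.inr)ᵀ * Ω * G‖ ^ 2
          * ‖(Matrix.diagonal (fun i => σ (Sum.inl i)))⁻¹
              * Matrix.diagonal (fun i => σt (Sum.inl i))‖ ^ 2
        + ‖Matrix.diagonal (fun i => σt (Sum.inr i))‖ ^ 2 := by
  set Q₁ := Q.submatrix id Sum.inl
  set Q₂ := Q.submatrix id Sum.inr
  set T := (diagonal fun i => σ (Sum.inl i))⁻¹ * diagonal fun i => σt (Sum.inl i)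
  set X := diagonal (fun i => σ (Sum.inr i)) * Q₂ᵀ * Ω * G * T
  have hG : Q₁ᵀ * Ω * G = 1 :=
    mul_eq_one_of_mul_mul_eq_self_of_rank_eq_card (by rw [hfullrank, Fintype.card_fin]) hG₁
  have hT : diagonal (fun i => σ (Sum.inl i)) * T = diagonal fun i => σt (Sum.inl i) :=
    mul_nonsing_inv_cancel_left _ _ <| by
      rw [det_diagonal]
      exact (Finset.prod_pos fun i _ => hσpos _).ne'.isUnit
  have hPY : IsStarProjection PY := ⟨hPYidem, by
    rw [IsSelfAdjoint, star_eq_conjTranspose, conjTranspose_eq_transpose_of_trivial, hPYsymm]⟩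
  have hQ : Qᴴ * Q = 1 := by rwa [conjTranspose_eq_transpose_of_trivial]
  calc ‖(1 - PY) * (Q * diagonal σt * Qᵀ)‖ ^ 2
      ≤ ‖Q * diagonal σt * Qᵀ - Q * diagonal σ * Qᵀ * Ω * (G * T * Q₁ᵀ)‖ ^ 2 := by
        gcongr
        exact l2_opNorm_one_sub_mul_le_of_mul_eq_self hPY
          (mul_eq_self_of_range_mulVecLin_le hPYidem hPYrange.ge) _ _
    _ = ‖fromCols (-X) (diagonal fun i => σt (Sum.inr i))‖ ^ 2 := by
        rw [mul_diagonal_mul_transpose_sub_eq _ _ _ _ hG hT,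
          ← conjTranspose_eq_transpose_of_trivial Q,
          l2_opNorm_mul_of_conjTranspose_mul_self_eq_one
            (conjTranspose_submatrix_mul_self_eq_one hQ Sum.inr_injective),
          l2_opNorm_mul_conjTranspose_of_conjTranspose_mul_self_eq_one hQ]
    _ ≤ ‖X‖ ^ 2 + ‖diagonal fun i => σt (Sum.inr i)‖ ^ 2 :=
        (l2_opNorm_fromCols_sq_le _ _).trans_eq (by rw [norm_neg])
    _ ≤ _ := by
        rw [← mul_pow]
        gcongr
        exact l2_opNorm_mul _ _

/-- Deterministic error bound for randomized range-finding (Lemma "the:2").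
`A = QΣQᵀ` is symmetric positive definite with eigenvalues `σ₁ ≥ … ≥ σ_d > 0`, partitioned
into a top `m×m` block `Σ₁` and bottom block `Σ₂` (the index set is `Fin m ⊕ Fin k`);
`Ã = QΣ̃Qᵀ` shares the same eigenvectors with `Σ̃₁` invertible. For a test matrix `Ω`
(`m ≤ l`) with `Q_∥ᵀΩ` of full row rank, pseudoinverse `G` of `Q_∥ᵀΩ`, and `P_Y` the
orthogonal projector onto `range(Y)` for `Y = AΩ`:
`‖(I − P_Y)Ã‖² ≤ ‖Σ₂ Q_⊥ᵀΩ (Q_∥ᵀΩ)†‖² ‖Σ₁⁻¹Σ̃₁‖² + ‖Σ̃₂‖²`. -/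
theorem randomized_rangefinder_error_bound {m k l : ℕ} (hml : m ≤ l)
    (Q : Matrix (Fin m ⊕ Fin k) (Fin m ⊕ Fin k) ℝ)
    (hQ₁ : Qᵀ * Q = 1) (hQ₂ : Q * Qᵀ = 1)
    (σ σt : Fin m ⊕ Fin k → ℝ)
    (hσpos : ∀ i, 0 < σ i)
    (hσ₁mono : ∀ i j : Fin m, i ≤ j → σ (Sum.inl j) ≤ σ (Sum.inl i))
    (hσ₂mono : ∀ i j : Fin k, i ≤ j → σ (Sum.inr j) ≤ σ (Sum.inr i))
    (hσsplit : ∀ (i : Fin m) (j : Fin k), σ (Sum.inr j) ≤ σ (Sum.inl i))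
    (hσt₁ : ∀ i : Fin m, σt (Sum.inl i) ≠ 0)
    (hA : (Q * Matrix.diagonal σ * Qᵀ).PosDef)
    (Ω : Matrix (Fin m ⊕ Fin k) (Fin l) ℝ)
    (hfullrank : ((Q.submatrix id Sum.inl)ᵀ * Ω).rank = m)
    (G : Matrix (Fin l) (Fin m) ℝ)
    (hG₁ : ((Q.submatrix id Sum.inl)ᵀ * Ω) * G * ((Q.submatrix id Sum.inl)ᵀ * Ω)
        = (Q.submatrix id Sum.inl)ᵀ * Ω)
    (hG₂ : G * ((Q.submatrix id Sum.inl)ᵀ * Ω) * G = G)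
    (hG₃ : (((Q.submatrix id Sum.inl)ᵀ * Ω) * G)ᵀ = ((Q.submatrix id Sum.inl)ᵀ * Ω) * G)
    (hG₄ : (G * ((Q.submatrix id Sum.inl)ᵀ * Ω))ᵀ = G * ((Q.submatrix id Sum.inl)ᵀ * Ω))
    (PY : Matrix (Fin m ⊕ Fin k) (Fin m ⊕ Fin k) ℝ)
    (hPYsymm : PY.IsSymm) (hPYidem : PY * PY = PY)
    (hPYrange : LinearMap.range PY.mulVecLin
        = LinearMap.range ((Q * Matrix.diagonal σ * Qᵀ) * Ω).mulVecLin) :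
    ‖(1 - PY) * (Q * Matrix.diagonal σt * Qᵀ)‖ ^ 2
      ≤ ‖Matrix.diagonal (fun i => σ (Sum.inr i)) * (Q.submatrix id Sum.inr)ᵀ * Ω * G‖ ^ 2
          * ‖(Matrix.diagonal (fun i => σ (Sum.inl i)))⁻¹
              * Matrix.diagonal (fun i => σt (Sum.inl i))‖ ^ 2
        + ‖Matrix.diagonal (fun i => σt (Sum.inr i))‖ ^ 2 :=
  randomized_rangefinder_error_bound_general Q hQ₁ σ σt hσpos Ω hfullrank G hG₁ PY hPYsymm hPYidem
    hPYrange
end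

section
/- Let F be a real matrix and D = −(I + FᵀF)⁻¹Fᵀ. Then the block matrix I − P_Z (with Z = [I; F]) satisfies I − P_Z ⪯ [[FᵀF, D], [Dᵀ, I]] in the Loewner order. -/
/-! With `G = (1 + FᵀF)⁻¹`, the off-diagonal blocks of the two sides coincide, so the gap is
block diagonal: its top-left block is `FᵀF - (1 - G) = FᵀF · G · FᵀF` (as `1 - G = FᵀF · G = G · FᵀF`)
and its bottom-right block is `F G Fᵀ`. Both are congruences of the positive definite `G`. -/

open Matrix

namespace Matrix

variable {m n : Type*} [Fintype m] [Fintype n] [DecidableEq m] [DecidableEq n]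

theorem PosSemidef.fromBlocks_zero {R : Type*} [CommRing R] [PartialOrder R] [StarRing R]
    [AddLeftMono R] {A : Matrix m m R} {D : Matrix n n R}
    (hA : A.PosSemidef) (hD : D.PosSemidef) : (fromBlocks A 0 0 D).PosSemidef := by
  let E₁ : Matrix (m ⊕ n) m R := fromRows 1 0
  let E₂ : Matrix (m ⊕ n) n R := fromRows 0 1
  have hsplit : fromBlocks A 0 0 D = E₁ * A * E₁ᴴ + E₂ * D * E₂ᴴ := by
    simp [E₁, E₂, conjTranspose_fromRows_eq_fromCols_conjTranspose, fromRows_mul, ← fromRows_zero,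
      fromBlocks_add]
  rw [hsplit]
  exact (hA.mul_mul_conjTranspose_same E₁).add (hD.mul_mul_conjTranspose_same E₂)

variable {R : Type*} [CommRing R]

theorem sub_one_sub_inv_one_add {A : Matrix m m R} (hA : IsUnit (1 + A).det) :
    A - (1 - (1 + A)⁻¹) = A * (1 + A)⁻¹ * A := by
  have hright : A * (1 + A)⁻¹ = 1 - (1 + A)⁻¹ := by
    rw [eq_sub_iff_add_eq, ← add_one_mul, add_comm, mul_nonsing_inv _ hA]
  have hleft : (1 + A)⁻¹ * A = 1 - (1 + A)⁻¹ := by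
    rw [eq_sub_iff_add_eq, ← mul_add_one, add_comm A, nonsing_inv_mul _ hA]
  rw [mul_assoc, hleft, mul_sub, mul_one, hright]

omit [Fintype n] in
theorem one_sub_fromRows_one_mul_mul_transpose (F : Matrix n m R) (G : Matrix m m R) :
    1 - fromRows 1 F * G * (fromRows 1 F)ᵀ
      = fromBlocks (1 - G) (-(G * Fᵀ)) (-(F * G)) (1 - F * G * Fᵀ) := by
  rw [transpose_fromRows, fromRows_mul, fromRows_mul_fromCols, sub_eq_add_neg, fromBlocks_neg,
    ← fromBlocks_one, fromBlocks_add]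
  simp [sub_eq_add_neg]

theorem fromBlocks_sub_one_sub_fromRows_one_mul_inv_mul_transpose (F : Matrix n m R)
    (hF : IsUnit (1 + Fᵀ * F).det) :
    fromBlocks (Fᵀ * F) (-((1 + Fᵀ * F)⁻¹ * Fᵀ)) (-((1 + Fᵀ * F)⁻¹ * Fᵀ))ᵀ 1
        - (1 - fromRows 1 F * (1 + Fᵀ * F)⁻¹ * (fromRows 1 F)ᵀ)
      = fromBlocks (Fᵀ * F * (1 + Fᵀ * F)⁻¹ * (Fᵀ * F)) 0 0 (F * (1 + Fᵀ * F)⁻¹ * Fᵀ) := by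
  have hsymm : ((1 + Fᵀ * F)⁻¹)ᵀ = (1 + Fᵀ * F)⁻¹ := by
    simp [transpose_nonsing_inv]
  rw [one_sub_fromRows_one_mul_mul_transpose, ← sub_one_sub_inv_one_add hF, transpose_neg,
    transpose_mul, transpose_transpose, hsymm, sub_eq_add_neg, fromBlocks_neg, fromBlocks_add]
  simp [sub_eq_add_neg]

end Matrix

/-- With `Z = [I; F]`, `P_Z = Z(I + FᵀF)⁻¹Zᵀ` the orthogonal projector onto `range(Z)`, and
`D = −(I + FᵀF)⁻¹Fᵀ`, we have `I − P_Z ⪯ [[FᵀF, D], [Dᵀ, I]]` in the Loewner order. -/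
theorem id_sub_projector_loewner_bound {p m : ℕ} (F : Matrix (Fin p) (Fin m) ℝ) :
    (Matrix.fromBlocks (Fᵀ * F) (-((1 + Fᵀ * F)⁻¹ * Fᵀ)) (-((1 + Fᵀ * F)⁻¹ * Fᵀ))ᵀ
        (1 : Matrix (Fin p) (Fin p) ℝ)
      - (1 - Matrix.fromRows (1 : Matrix (Fin m) (Fin m) ℝ) F * (1 + Fᵀ * F)⁻¹
          * (Matrix.fromRows (1 : Matrix (Fin m) (Fin m) ℝ) F)ᵀ)).PosSemidef := by
  have hA : (Fᵀ * F).PosSemidef := by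
    simpa using posSemidef_conjTranspose_mul_self F
  have hPD : (1 + Fᵀ * F).PosDef := PosDef.one.add_posSemidef hA
  have hG : (1 + Fᵀ * F)⁻¹.PosSemidef := hPD.inv.posSemidef
  rw [fromBlocks_sub_one_sub_fromRows_one_mul_inv_mul_transpose F
    ((isUnit_iff_isUnit_det _).mp hPD.isUnit)]
  refine .fromBlocks_zero ?_ ?_
  · simpa [hA.isHermitian.eq] using hG.mul_mul_conjTranspose_same (Fᵀ * F)
  · simpa using hG.mul_mul_conjTranspose_same F
end
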